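/- Let W be a compact metric space, X a metric space with Borel sigma-algebra, (Z_t)_{t∈ℕ} an i.i.d. sequence of X-valued random elements on a probability space (Ω, 𝒜, P), and l : W × X → ℝ such that: l(w, ·) is measurable for each w ∈ W; l(·, x) is continuous for each x ∈ X; there is a measurable d : X → ℝ≥0 with |l(w, x)| ≤ d(x) for all w, x; and E[d(Z_1)] < ∞. Then sup_{w ∈ W} | (1/n) Σ_{i=1}^n l(w, Z_i) − E[l(w, Z_1)] | → 0 almost surely as n → ∞. -/

import Mathlib

/-!
The map `x ↦ l(·, x)` is a random element of the separable Banach space `C(W, ℝ)`. It is Borel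
measurable because restriction to a countable dense subset of `W` is a continuous injection of
Polish spaces, hence a measurable embedding, and it is Bochner integrable because its sup norm is
dominated by `d`. The uniform law is therefore the strong law of large numbers in `C(W, ℝ)`: the sup
norm is the supremum over `W`, and evaluation at `w` commutes with the Bochner integral.
-/

open MeasureTheory Filter

namespace ContinuousMap

variable {W Y : Type*} [TopologicalSpace W] [CompactSpace W] [SecondCountableTopology W]
  [R1Space W] [MetricSpace Y] [CompleteSpace Y] [SecondCountableTopology Y]
  [MeasurableSpace Y] [BorelSpace Y] [MeasurableSpace C(W, Y)] [BorelSpace C(W, Y)]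

theorem measurable_of_measurable_apply {X : Type*} [MeasurableSpace X] {F : X → C(W, Y)}
    (hF : ∀ w, Measurable fun x => F x w) : Measurable F := by
  obtain ⟨D, hDc, hD⟩ := TopologicalSpace.exists_countable_dense W
  have : Countable D := hDc.to_subtype
  have hemb : MeasurableEmbedding fun (f : C(W, Y)) (w : D) => f w :=
    Continuous.measurableEmbedding (by fun_prop) fun f g hfg =>
      DFunLike.ext' <| f.continuous.ext_on hD g.continuous fun w hw => congr_fun hfg ⟨w, hw⟩
  exact hemb.measurable_comp_iff.1 (measurable_pi_iff.2 fun w => hF w)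

end ContinuousMap

namespace ProbabilityTheory

theorem strong_law_ae_comp {Ω X E : Type*} [MeasurableSpace Ω] {P : Measure Ω}
    [MeasurableSpace X] [NormedAddCommGroup E] [NormedSpace ℝ E] [CompleteSpace E]
    [MeasurableSpace E] [BorelSpace E]
    {Z : ℕ → Ω → X} (hZm : ∀ t, Measurable (Z t)) (hindep : Pairwise fun i j => IndepFun (Z i) (Z j) P)
    (hident : ∀ t, P.map (Z t) = P.map (Z 0)) {F : X → E} (hF : Measurable F)
    (hint : Integrable (fun ω => F (Z 0 ω)) P) :
    ∀ᵐ ω ∂P, Tendsto (fun n : ℕ => (n : ℝ)⁻¹ • ∑ i ∈ Finset.range n, F (Z i ω)) atTop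
      (nhds (∫ ω, F (Z 0 ω) ∂P)) :=
  strong_law_ae (fun i ω => F (Z i ω)) hint
    (fun _ _ hij => (hindep hij).comp hF hF)
    (fun i => (IdentDistrib.mk (hZm i).aemeasurable (hZm 0).aemeasurable (hident i)).comp hF)

end ProbabilityTheory

theorem uniform_strong_law_of_large_numbers_general
    {W X Ω : Type*} [MetricSpace W] [CompactSpace W]
    [MeasurableSpace X]
    [MeasurableSpace Ω] (P : Measure Ω)
    (Z : ℕ → Ω → X) (hZm : ∀ t, Measurable (Z t))
    (hindep : ProbabilityTheory.iIndepFun Z P)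
    (hident : ∀ t, Measure.map (Z t) P = Measure.map (Z 0) P)
    (l : W → X → ℝ)
    (hlm : ∀ w : W, Measurable fun x => l w x)
    (hlc : ∀ x : X, Continuous fun w => l w x)
    (d : X → ℝ) (hd0 : ∀ x, 0 ≤ d x)
    (hdom : ∀ w x, |l w x| ≤ d x)
    (hdint : Integrable (fun ω => d (Z 0 ω)) P) :
    ∀ᵐ ω ∂P, Tendsto
      (fun n : ℕ => ⨆ w : W,
        |(n : ℝ)⁻¹ * ∑ i ∈ Finset.range n, l w (Z i ω) - ∫ ω', l w (Z 0 ω') ∂P|)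
      atTop (nhds 0) := by
  let _ : MeasurableSpace C(W, ℝ) := borel _
  have _ : BorelSpace C(W, ℝ) := ⟨rfl⟩
  let F : X → C(W, ℝ) := fun x => ⟨fun w => l w x, hlc x⟩
  have hFm : Measurable F := ContinuousMap.measurable_of_measurable_apply hlm
  have hFint : Integrable (fun ω => F (Z 0 ω)) P :=
    hdint.mono' (hFm.comp (hZm 0)).aestronglyMeasurable <| ae_of_all _ fun ω =>
      (ContinuousMap.norm_le _ (hd0 _)).2 fun w => hdom w (Z 0 ω)
  filter_upwards [ProbabilityTheory.strong_law_ae_comp hZm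
    (fun _ _ hij => hindep.indepFun hij) hident hFm hFint] with ω hω
  rw [tendsto_iff_norm_sub_tendsto_zero] at hω
  refine hω.congr fun n => ?_
  simp [ContinuousMap.norm_eq_iSup_norm, ContinuousMap.integral_apply hFint, F]

/-- Uniform strong law of large numbers over a compact parameter space for a
dominated Carathéodory integrand evaluated along an i.i.d. sequence. -/
theorem uniform_strong_law_of_large_numbers
    {W X Ω : Type*} [MetricSpace W] [CompactSpace W] [Nonempty W]
    [MetricSpace X] [MeasurableSpace X] [BorelSpace X]
    [MeasurableSpace Ω] (P : Measure Ω) [IsProbabilityMeasure P]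
    (Z : ℕ → Ω → X) (hZm : ∀ t, Measurable (Z t))
    (hindep : ProbabilityTheory.iIndepFun Z P)
    (hident : ∀ t, Measure.map (Z t) P = Measure.map (Z 0) P)
    (l : W → X → ℝ)
    (hlm : ∀ w : W, Measurable fun x => l w x)
    (hlc : ∀ x : X, Continuous fun w => l w x)
    (d : X → ℝ) (hdm : Measurable d) (hd0 : ∀ x, 0 ≤ d x)
    (hdom : ∀ w x, |l w x| ≤ d x)
    (hdint : Integrable (fun ω => d (Z 0 ω)) P) :
    ∀ᵐ ω ∂P, Tendsto
      (fun n : ℕ => ⨆ w : W,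
        |(n : ℝ)⁻¹ * ∑ i ∈ Finset.range n, l w (Z i ω) - ∫ ω', l w (Z 0 ω') ∂P|)
      atTop (nhds 0) :=
  uniform_strong_law_of_large_numbers_general P Z hZm hindep hident l hlm hlc d hd0 hdom hdint
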